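/- arXiv:math/0208008 — 4 statements merged into one kernel-verified Lean document; each statement's English description precedes it below -/
import Mathlib

section
/- Let k be a number field containing a CM subfield, and let k_CM denote the maximal CM subfield of k. Then for every rational prime p one has E_p(k) = E_p(k_CM), i.e. every x ∈ k^* with ‖x‖_v = 1 for all places v of k not above p already lies in k_CM. -/
open NumberField IsDedekindDomain IntermediateField

noncomputable section

/-- Membership in `E_p(k)`: `x ≠ 0`, `ord_v x = 0` (i.e. `v`-adic valuation `1`) for every
finite place `v` not dividing `p`, and `|σ x| = 1` for every complex embedding `σ`. -/
def IsEp (k : Type*) [Field k] [NumberField k] (p : ℕ) (x : k) : Prop :=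
  x ≠ 0 ∧
  (∀ v : HeightOneSpectrum (𝓞 k), (p : 𝓞 k) ∉ v.asIdeal → v.valuation k x = 1) ∧
  (∀ σ : k →+* ℂ, ‖σ x‖ = 1)

open Classical in
/-- `ord_v(x) ∈ ℤ`, the `v`-adic order of `x ∈ k`. -/
def ordAt {k : Type*} [Field k] [NumberField k] (v : HeightOneSpectrum (𝓞 k)) (x : k) : ℤ :=
  if h : x = 0 then 0
  else - Multiplicative.toAdd (WithZero.unzero (((v.valuation k).ne_zero_iff).mpr h))

/-- The image of a prime `v` of `k` under a field automorphism `σ` of `k`. -/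
def primeMap {k : Type*} [Field k] [NumberField k] (σ : k ≃ₐ[ℚ] k)
    (v : HeightOneSpectrum (𝓞 k)) : HeightOneSpectrum (𝓞 k) where
  asIdeal := Ideal.comap (RingOfIntegers.mapRingEquiv σ.toRingEquiv).symm.toRingHom v.asIdeal
  isPrime := v.isPrime.comap _
  ne_bot := fun h => v.ne_bot (by
    have h2 := Ideal.map_comap_of_surjective
      (RingOfIntegers.mapRingEquiv σ.toRingEquiv).symm.toRingHom
      (RingOfIntegers.mapRingEquiv σ.toRingEquiv).symm.surjective v.asIdeal
    rw [h, Ideal.map_bot] at h2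
    exact h2.symm)

/-- The inertia degree `f(v|p)` of a prime `v` of `k` over the rational prime `p`. -/
def fdeg {k : Type*} [Field k] [NumberField k] (p : ℕ) (v : HeightOneSpectrum (𝓞 k)) : ℕ :=
  Ideal.inertiaDeg' (Ideal.span {(p : ℤ)}) v.asIdeal

/-- A totally real field: every complex embedding has real image. -/
def IsTotallyRealField (F : Type*) [Field F] : Prop :=
  ∀ (σ : F →+* ℂ) (x : F), (σ x).im = 0

/-- A CM field: a totally imaginary quadratic extension of a totally real field. -/
def IsCMField (F : Type*) [Field F] : Prop :=
  (∀ σ : F →+* ℂ, ∃ x : F, (σ x).im ≠ 0) ∧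
  ∃ F₀ : Subfield F, IsTotallyRealField F₀ ∧ Module.finrank F₀ F = 2

/-! If some complex embedding `σ` makes `σ x` real, then `|σ x| = 1` forces `x = ±1`.
Otherwise `σ x` is nonreal for every `σ`, while `σ (x + x⁻¹) = σ x + conj (σ x)` is always
real. Hence `ℚ(x)` is totally imaginary, `ℚ(x + x⁻¹)` is totally real, and `x` is a root of
`X² - (x + x⁻¹) X + 1` over the latter, so `ℚ(x)` is a CM field and lies in `k_CM`. -/

theorem RingHom.exists_comp_algebraMap_eq {K L : Type*} [Field K] [Field L] [Algebra K L]
    [Algebra.IsAlgebraic K L] (ρ : K →+* ℂ) : ∃ σ : L →+* ℂ, σ.comp (algebraMap K L) = ρ := by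
  let : Algebra K ℂ := ρ.toAlgebra
  exact ⟨(IsAlgClosed.lift : L →ₐ[K] ℂ).toRingHom,
    RingHom.ext fun a ↦ by simp [RingHom.algebraMap_toAlgebra]⟩

theorem eq_one_or_eq_neg_one_of_norm_eq_one {K : Type*} [Field K] {σ : K →+* ℂ} {x : K}
    (hnorm : ‖σ x‖ = 1) (him : (σ x).im = 0) : x = 1 ∨ x = -1 := by
  have hre : |(σ x).re| = 1 := by
    rwa [← Complex.re_add_im (σ x), him, Complex.ofReal_zero, zero_mul, add_zero,
      Complex.norm_real, Real.norm_eq_abs] at hnorm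
  have hσx : σ x = ((σ x).re : ℂ) := Complex.ext rfl (by simp [him])
  rcases abs_eq (zero_le_one' ℝ) |>.mp hre with h | h
  · exact .inl (σ.injective (by rw [hσx, h, map_one, Complex.ofReal_one]))
  · exact .inr (σ.injective (by rw [hσx, h, map_neg, map_one, Complex.ofReal_neg,
      Complex.ofReal_one]))

theorem im_eq_zero_of_mem_closure_singleton {K : Type*} [Field K] (σ : K →+* ℂ) {t : K}
    (ht : (σ t).im = 0) {a : K} (ha : a ∈ Subfield.closure {t}) : (σ a).im = 0 := by
  have : Set.EqOn ((starRingEnd ℂ).comp σ) σ {t} := by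
    rintro _ rfl
    exact Complex.conj_eq_iff_im.mpr ht
  exact Complex.conj_eq_iff_im.mp (RingHom.eqOn_field_closure this ha)

theorem isTotallyRealField_of_forall_im_eq_zero {L : Type*} [Field L] (A : Subfield L)
    [Algebra.IsAlgebraic A L] (h : ∀ σ : L →+* ℂ, ∀ a ∈ A, (σ a).im = 0) :
    IsTotallyRealField A := by
  intro ρ a
  obtain ⟨σ, rfl⟩ := RingHom.exists_comp_algebraMap_eq (L := L) ρ
  exact h σ a a.2

theorem Subfield.eq_top_of_preimage_subset {K : Type*} [Field K] {s : Set K}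
    (A : Subfield (closure s)) (h : Subtype.val ⁻¹' s ⊆ (A : Set (closure s))) : A = ⊤ := by
  refine eq_top_iff.mpr fun y _ ↦ ?_
  have hs : s ⊆ A.map (closure s).subtype := fun a ha ↦
    ⟨⟨a, subset_closure ha⟩, h ha, rfl⟩
  obtain ⟨z, hz, hzy⟩ := closure_le.mpr hs y.2
  rwa [← Subtype.ext hzy]

open Polynomial in
theorem IntermediateField.finrank_adjoin_simple_eq_two {K L : Type*} [Field K] [Field L]
    [Algebra K L] {α : L} (hα : α ∉ (algebraMap K L).range) {t : K}
    (ht : α ^ 2 - algebraMap K L t * α + 1 = 0) : Module.finrank K K⟮α⟯ = 2 := by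
  set q : K[X] := X ^ 2 - C t * X + 1
  have hq : q.Monic := by unfold q; monicity!
  have hqα : aeval α q = 0 := by simpa [q, Algebra.smul_def] using ht
  have hint : IsIntegral K α := ⟨q, hq, hqα⟩
  have hle : (minpoly K α).natDegree ≤ 2 := by
    have hdeg : q.natDegree = 2 := by unfold q; compute_degree!
    exact hdeg ▸ natDegree_le_of_dvd (minpoly.dvd K α hqα) hq.ne_zero
  rw [adjoin.finrank hint]
  exact le_antisymm hle ((minpoly.two_le_natDegree_iff hint).mpr hα)

theorem Subfield.finrank_comap_closure_add_inv_eq_two {K : Type*} [Field K] {x : K}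
    (hx0 : x ≠ 0) (hx : x ∉ closure {x + x⁻¹}) :
    Module.finrank ((closure {x + x⁻¹}).comap (closure {x}).subtype) (closure {x}) = 2 := by
  set F := closure {x}
  set F₀ := (closure {x + x⁻¹}).comap F.subtype
  have hxF : x ∈ F := subset_closure rfl
  let X : F := ⟨x, hxF⟩
  let t : F₀ := ⟨⟨x + x⁻¹, F.add_mem hxF (F.inv_mem hxF)⟩, subset_closure rfl⟩
  have ht : X ^ 2 - algebraMap F₀ F t * X + 1 = 0 := Subtype.ext <| by
    change x ^ 2 - (x + x⁻¹) * x + 1 = 0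
    field_simp
    ring
  have hX : X ∉ (algebraMap F₀ F).range := by
    rintro ⟨w, hw⟩
    have hwx : ((w : F) : K) = x := congrArg Subtype.val hw
    exact hx (hwx.subst (motive := (· ∈ closure {x + x⁻¹})) w.2)
  have htop : F₀⟮X⟯ = ⊤ := by
    refine toSubfield_injective (eq_top_of_preimage_subset _ fun y hy ↦ ?_)
    rw [show y = X from Subtype.ext hy]
    exact mem_adjoin_simple_self F₀ X
  rw [← finrank_top', ← htop]
  exact finrank_adjoin_simple_eq_two hX ht

theorem isCMField_closure_singleton {k : Type*} [Field k] [NumberField k] {x : k}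
    (hnorm : ∀ σ : k →+* ℂ, ‖σ x‖ = 1) (him : ∀ σ : k →+* ℂ, (σ x).im ≠ 0) :
    _root_.IsCMField (Subfield.closure {x}) := by
  obtain ⟨σ₀⟩ := (inferInstance : Nonempty (k →+* ℂ))
  have hK₀ : ∀ σ : k →+* ℂ, ∀ a ∈ Subfield.closure {x + x⁻¹}, (σ a).im = 0 := fun σ _ ↦
    im_eq_zero_of_mem_closure_singleton σ <| by
      simp [Complex.inv_eq_conj (hnorm σ)]
  refine ⟨fun τ ↦ ?_, _, ?_, Subfield.finrank_comap_closure_add_inv_eq_two ?_ ?_⟩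
  · obtain ⟨σ, rfl⟩ := RingHom.exists_comp_algebraMap_eq (L := k) τ
    exact ⟨⟨x, Subfield.subset_closure rfl⟩, him σ⟩
  · refine isTotallyRealField_of_forall_im_eq_zero _ fun τ a ha ↦ ?_
    obtain ⟨σ, rfl⟩ := RingHom.exists_comp_algebraMap_eq (L := k) τ
    exact hK₀ σ a ha
  · rintro rfl
    simpa using hnorm σ₀
  · exact fun h ↦ him σ₀ (hK₀ σ₀ x h)

theorem statement1_general (k : Type*) [Field k] [NumberField k] (p : ℕ)
    (kCM : Subfield k)
    (hmax : ∀ F : Subfield k, _root_.IsCMField ↥F → F ≤ kCM)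
    (x : k) (hx : IsEp k p x) : x ∈ kCM := by
  obtain ⟨-, -, hnorm⟩ := hx
  by_cases hreal : ∃ σ : k →+* ℂ, (σ x).im = 0
  · obtain ⟨σ, hσ⟩ := hreal
    rcases eq_one_or_eq_neg_one_of_norm_eq_one (hnorm σ) hσ with rfl | rfl
    · exact kCM.one_mem
    · exact kCM.neg_mem kCM.one_mem
  · exact hmax _ (isCMField_closure_singleton hnorm fun σ hσ ↦ hreal ⟨σ, hσ⟩)
      (Subfield.subset_closure rfl)

/-- If `k` contains a CM subfield and `kCM` is the maximal CM subfield of `k`,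
then `E_p(k) = E_p(kCM)`: every `x ∈ k^*` with `‖x‖_v = 1` for all places `v` not above `p`
already lies in `kCM`. -/
theorem statement1 (k : Type*) [Field k] [NumberField k] (p : ℕ) (hp : p.Prime)
    (kCM : Subfield k) (hkCM : _root_.IsCMField ↥kCM)
    (hmax : ∀ F : Subfield k, _root_.IsCMField ↥F → F ≤ kCM)
    (x : k) (hx : IsEp k p x) : x ∈ kCM :=
  statement1_general k p kCM hmax x hx

end
end

section
/- Let k be a CM field with complex conjugation c, p a rational prime, and let S, M and the x_𝔭 be as in the context. Then the elements ξ_𝔭 = c(x_𝔭)·x_𝔭^{-1} ∈ E_p(k) for 𝔭 ∈ S form a ℚ-basis of E_p(k) ⊗_ℤ ℚ; equivalently, the ξ_𝔭 (𝔭 ∈ S) are multiplicatively independent and the subgroup they generate together with μ(k) has finite index in E_p(k). -/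
open NumberField IsDedekindDomain IntermediateField

noncomputable section

/-!
Write `ξ_𝔭 = c(x_𝔭) / x_𝔭`. As `c` permutes the primes and `(x_𝔭) = 𝔭 ^ e_𝔭`, the element `ξ_𝔭`
has order `e_𝔭` at `𝔭`, `-e_𝔭` at `c 𝔭` and `0` elsewhere; since `S` meets each pair `{𝔭, c 𝔭}`
in exactly one prime, the orders at the primes of `S` detect the exponents, which gives
independence. Conversely, `|φ y| = 1` for all `φ` forces `c y = y⁻¹` for `y ∈ E_p(k)`, so the
orders of `y` at `𝔭` and `c 𝔭` are opposite and vanish at primes fixed by `c`. Dividing `y ^ M` by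
the product of the `ξ_𝔭` with matching orders on `S` leaves an `ε` with `c ε = ε⁻¹` and trivial
valuation everywhere: an algebraic integer all of whose conjugates have absolute value `1`, hence
a root of unity by Kronecker's theorem.
-/

open HeightOneSpectrum WithZero

namespace IsDedekindDomain.HeightOneSpectrum

variable {R : Type*} [CommRing R] [IsDedekindDomain R]

theorem intValuation_of_span_eq_pow {v : HeightOneSpectrum R} {r : R} {e : ℕ}
    (h : Ideal.span {r} = v.asIdeal ^ e) : v.intValuation r = exp (-(e : ℤ)) := by
  have hr : r ≠ 0 := by
    rintro rfl
    exact pow_ne_zero e v.ne_bot (by simpa [eq_comm] using h)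
  rw [intValuation_eq_exp_neg_multiplicity v hr, h, multiplicity_pow_self_of_prime v.prime]

theorem intValuation_of_span_eq_pow_of_ne {v w : HeightOneSpectrum R} {r : R} {e : ℕ}
    (h : Ideal.span {r} = v.asIdeal ^ e) (hw : w ≠ v) : w.intValuation r = 1 := by
  rw [intValuation_eq_one_iff]
  intro hrw
  have hle : v.asIdeal ^ e ≤ w.asIdeal := h ▸ (Ideal.span_singleton_le_iff_mem _).mpr hrw
  exact hw (HeightOneSpectrum.ext (v.isMaximal.eq_of_le w.isPrime.ne_top
    (Ideal.IsPrime.le_of_pow_le hle)).symm)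

theorem intValuation_equivOfRingEquiv {S : Type*} [CommRing S] [IsDedekindDomain S]
    (e : R ≃+* S) (v : HeightOneSpectrum R) (r : R) :
    (equivOfRingEquiv e v).intValuation (e r) = v.intValuation r := by
  rcases eq_or_ne r 0 with rfl | hr
  · simp
  rw [intValuation_eq_exp_neg_multiplicity _ (by simpa using hr),
    intValuation_eq_exp_neg_multiplicity _ hr]
  congr 3
  refine multiplicity_eq_of_emultiplicity_eq (emultiplicity_eq_emultiplicity_iff.mpr fun n => ?_)
  simp only [Ideal.dvd_span_singleton, equivOfRingEquiv_apply]
  change e r ∈ (v.asIdeal.comap e.symm) ^ n ↔ _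
  rw [Ideal.comap_symm, ← Ideal.map_pow]
  exact Ideal.apply_mem_of_equiv_iff

end IsDedekindDomain.HeightOneSpectrum

theorem WithZero.eq_one_of_eq_inv {a : ℤᵐ⁰} (ha : a ≠ 0) (h : a = a⁻¹) : a = 1 := by
  lift a to ℤ using ha with n
  rw [← exp_neg, exp_inj] at h
  rw [exp_eq_one]
  omega

namespace NumberField

variable {K L : Type*} [Field K] [NumberField K] [Field L] [NumberField L]

theorem valuation_equivOfRingEquiv_mapRingEquiv (σ : K ≃+* L) (v : HeightOneSpectrum (𝓞 K))
    (x : K) :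
    (equivOfRingEquiv (RingOfIntegers.mapRingEquiv σ) v).valuation L (σ x) = v.valuation K x := by
  obtain ⟨a, b, -, rfl⟩ := IsFractionRing.div_surjective (A := 𝓞 K) x
  have hσ (t : 𝓞 K) : σ (algebraMap (𝓞 K) K t) =
      algebraMap (𝓞 L) L (RingOfIntegers.mapRingEquiv σ t) := rfl
  simp only [map_div₀, hσ, valuation_of_algebraMap, intValuation_equivOfRingEquiv]

end NumberField

section Conjugation

variable {k : Type*} [Field k] [NumberField k] (c : k ≃ₐ[ℚ] k)

theorem valuation_primeMap_apply (v : HeightOneSpectrum (𝓞 k)) (x : k) :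
    (primeMap c v).valuation k (c x) = v.valuation k x :=
  valuation_equivOfRingEquiv_mapRingEquiv c.toRingEquiv v x

theorem natCast_mem_primeMap_iff (p : ℕ) (v : HeightOneSpectrum (𝓞 k)) :
    (p : 𝓞 k) ∈ (primeMap c v).asIdeal ↔ (p : 𝓞 k) ∈ v.asIdeal := by
  change (RingOfIntegers.mapRingEquiv c.toRingEquiv).symm p ∈ v.asIdeal ↔ _
  rw [map_natCast]

variable {c}

theorem involutive_of_conj (hc : ∀ (φ : k →+* ℂ) (y : k), φ (c y) = (starRingEnd ℂ) (φ y)) :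
    Function.Involutive c := fun y =>
  (Classical.arbitrary (k →+* ℂ)).injective (by rw [hc, hc, Complex.conj_conj])

theorem primeMap_involutive (hcc : Function.Involutive c) : Function.Involutive (primeMap c) := by
  intro v
  ext r
  change (RingOfIntegers.mapRingEquiv c.toRingEquiv).symm
    ((RingOfIntegers.mapRingEquiv c.toRingEquiv).symm r) ∈ v.asIdeal ↔ r ∈ v.asIdeal
  have hsymm (y : k) : c.symm y = c y := c.symm_apply_eq.mpr (hcc y).symm
  rw [show (RingOfIntegers.mapRingEquiv c.toRingEquiv).symm
    ((RingOfIntegers.mapRingEquiv c.toRingEquiv).symm r) = r from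
    RingOfIntegers.ext (by simp [RingOfIntegers.mapRingEquiv_symm_apply, hsymm, hcc _])]

theorem conj_eq_inv_of_norm_eq_one
    (hc : ∀ (φ : k →+* ℂ) (y : k), φ (c y) = (starRingEnd ℂ) (φ y)) {y : k}
    (hy : ∀ φ : k →+* ℂ, ‖φ y‖ = 1) : c y = y⁻¹ := by
  let φ := Classical.arbitrary (k →+* ℂ)
  exact φ.injective (by rw [hc, map_inv₀, Complex.inv_eq_conj (hy φ)])

theorem conj_conj_mul_inv (hcc : Function.Involutive c) (a : k) :
    c (c a * a⁻¹) = (c a * a⁻¹)⁻¹ := by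
  rw [map_mul, map_inv₀, hcc a, mul_inv, inv_inv, mul_comm]

theorem norm_eq_one_of_conj_eq_inv
    (hc : ∀ (φ : k →+* ℂ) (y : k), φ (c y) = (starRingEnd ℂ) (φ y)) {z : k} (hz0 : z ≠ 0)
    (hz : c z = z⁻¹) (φ : k →+* ℂ) : ‖φ z‖ = 1 := by
  have h : φ z * (starRingEnd ℂ) (φ z) = 1 := by
    rw [← hc, hz, ← map_mul, mul_inv_cancel₀ hz0, map_one]
  rw [Complex.mul_conj, Complex.normSq_eq_norm_sq] at h
  exact (pow_eq_one_iff_of_nonneg (norm_nonneg _) two_ne_zero).mp (by exact_mod_cast h)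

theorem valuation_primeMap_of_conj_eq_inv {z : k} (hz : c z = z⁻¹)
    (w : HeightOneSpectrum (𝓞 k)) : (primeMap c w).valuation k z = (w.valuation k z)⁻¹ := by
  rw [← valuation_primeMap_apply c w z, hz, map_inv₀, inv_inv]

theorem valuation_eq_one_of_conj_eq_inv_of_primeMap_eq {z : k} (hz0 : z ≠ 0) (hz : c z = z⁻¹)
    {w : HeightOneSpectrum (𝓞 k)} (hw : primeMap c w = w) : w.valuation k z = 1 :=
  WithZero.eq_one_of_eq_inv ((Valuation.ne_zero_iff _).mpr hz0)
    (by simpa only [hw] using valuation_primeMap_of_conj_eq_inv hz w)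

theorem valuation_eq_one_of_conj_eq_inv (hcc : Function.Involutive c) {z : k} (hz0 : z ≠ 0)
    (hz : c z = z⁻¹) {P : HeightOneSpectrum (𝓞 k) → Prop}
    (hP : ∀ w, primeMap c w ≠ w → P w ∨ P (primeMap c w))
    (h1 : ∀ w, P w → w.valuation k z = 1) (w : HeightOneSpectrum (𝓞 k)) :
    w.valuation k z = 1 := by
  by_cases hw : primeMap c w = w
  · exact valuation_eq_one_of_conj_eq_inv_of_primeMap_eq hz0 hz hw
  rcases hP w hw with hPw | hPw
  · exact h1 w hPw
  · rw [← primeMap_involutive hcc w, valuation_primeMap_of_conj_eq_inv hz, h1 _ hPw, inv_one]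

theorem valuation_conj_apply (hcc : Function.Involutive c) (w : HeightOneSpectrum (𝓞 k))
    (a : k) : w.valuation k (c a) = (primeMap c w).valuation k a := by
  conv_lhs => rw [← primeMap_involutive hcc w]
  exact valuation_primeMap_apply c _ a

theorem exists_pow_eq_one_of_conj_eq_inv
    (hc : ∀ (φ : k →+* ℂ) (y : k), φ (c y) = (starRingEnd ℂ) (φ y)) {z : k} (hz0 : z ≠ 0)
    (hz : c z = z⁻¹) (hval : ∀ w : HeightOneSpectrum (𝓞 k), w.valuation k z = 1) :
    ∃ l : ℕ, 0 < l ∧ z ^ l = 1 := by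
  obtain ⟨t, rfl⟩ := mem_integers_of_valuation_le_one k z fun w => (hval w).le
  obtain ⟨l, hl, hzl⟩ := NumberField.Embeddings.pow_eq_one_of_norm_eq_one k ℂ
    (RingOfIntegers.isIntegral_coe t) (norm_eq_one_of_conj_eq_inv hc hz0 hz)
  exact ⟨l, hl, hzl⟩

end Conjugation

section ConjRatio

variable {k : Type*} [Field k] [NumberField k] {c : k ≃ₐ[ℚ] k}
  {v w : HeightOneSpectrum (𝓞 k)} {r : 𝓞 k} {e : ℕ}

theorem valuation_coe_of_span_eq_pow (h : Ideal.span {r} = v.asIdeal ^ e) :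
    v.valuation k (r : k) = exp (-(e : ℤ)) :=
  (valuation_of_algebraMap v r).trans (intValuation_of_span_eq_pow h)

theorem valuation_coe_of_span_eq_pow_of_ne (h : Ideal.span {r} = v.asIdeal ^ e) (hw : w ≠ v) :
    w.valuation k (r : k) = 1 :=
  (valuation_of_algebraMap w r).trans (intValuation_of_span_eq_pow_of_ne h hw)

theorem valuation_conj_mul_inv_of_ne (hcc : Function.Involutive c)
    (h : Ideal.span {r} = v.asIdeal ^ e) (hwv : w ≠ v) (hwcv : w ≠ primeMap c v) :
    w.valuation k (c r * (r : k)⁻¹) = 1 := by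
  have hcwv : primeMap c w ≠ v := fun hv => hwcv (by rw [← hv, primeMap_involutive hcc])
  rw [map_mul, map_inv₀, valuation_conj_apply hcc, valuation_coe_of_span_eq_pow_of_ne h hcwv,
    valuation_coe_of_span_eq_pow_of_ne h hwv, inv_one, mul_one]

theorem valuation_conj_mul_inv_self (hcc : Function.Involutive c)
    (h : Ideal.span {r} = v.asIdeal ^ e) (hv : primeMap c v ≠ v) :
    v.valuation k (c r * (r : k)⁻¹) = exp (e : ℤ) := by
  rw [map_mul, map_inv₀, valuation_conj_apply hcc, valuation_coe_of_span_eq_pow_of_ne h hv,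
    valuation_coe_of_span_eq_pow h, one_mul, exp_neg, inv_inv]

theorem isEp_conj_mul_inv (hc : ∀ (φ : k →+* ℂ) (y : k), φ (c y) = (starRingEnd ℂ) (φ y))
    {p : ℕ} (h : Ideal.span {r} = v.asIdeal ^ e) (hp : (p : 𝓞 k) ∈ v.asIdeal) :
    IsEp k p (c r * (r : k)⁻¹) := by
  have hcc := involutive_of_conj hc
  have hr : (r : k) ≠ 0 :=
    (Valuation.ne_zero_iff _).mp (by rw [valuation_coe_of_span_eq_pow h]; exact exp_ne_zero)
  have hξ0 : c r * (r : k)⁻¹ ≠ 0 := mul_ne_zero ((map_ne_zero c).mpr hr) (inv_ne_zero hr)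
  refine ⟨hξ0, fun w hpw => ?_, norm_eq_one_of_conj_eq_inv hc hξ0 (conj_conj_mul_inv hcc _)⟩
  refine valuation_conj_mul_inv_of_ne hcc h (fun hwv => hpw (hwv ▸ hp)) fun hwv => hpw ?_
  rwa [hwv, natCast_mem_primeMap_iff]

variable {S : Finset (HeightOneSpectrum (𝓞 k))} {x : HeightOneSpectrum (𝓞 k) → 𝓞 k}
  {e : HeightOneSpectrum (𝓞 k) → ℕ}

theorem valuation_prod_conj_mul_inv_zpow (hcc : Function.Involutive c)
    (hx : ∀ v ∈ S, Ideal.span {x v} = v.asIdeal ^ e v) (hS : ∀ v ∈ S, primeMap c v ∉ S)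
    (a : HeightOneSpectrum (𝓞 k) → ℤ) (hw : w ∈ S) :
    w.valuation k (∏ v ∈ S, (c (x v : k) * (x v : k)⁻¹) ^ a v) = exp (e w * a w) := by
  rw [map_prod, Finset.prod_eq_single_of_mem w hw fun u hu hne => by
      rw [map_zpow₀, valuation_conj_mul_inv_of_ne hcc (hx u hu) hne.symm
        (fun hwu => hS u hu (hwu ▸ hw)), one_zpow],
    map_zpow₀, valuation_conj_mul_inv_self hcc (hx w hw) (fun hww => hS w hw (hww.symm ▸ hw)),
    ← exp_zsmul, smul_eq_mul, mul_comm]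

theorem eq_zero_of_prod_conj_mul_inv_zpow_eq_one (hcc : Function.Involutive c)
    (hx : ∀ v ∈ S, Ideal.span {x v} = v.asIdeal ^ e v) (hS : ∀ v ∈ S, primeMap c v ∉ S)
    (he : ∀ v ∈ S, 0 < e v) (a : HeightOneSpectrum (𝓞 k) → ℤ)
    (h : ∏ v ∈ S, (c (x v : k) * (x v : k)⁻¹) ^ a v = 1) : ∀ v ∈ S, a v = 0 := by
  intro v hv
  have hval := congrArg (v.valuation k) h
  rw [valuation_prod_conj_mul_inv_zpow hcc hx hS a hv, map_one, exp_eq_one] at hval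
  exact (mul_eq_zero.mp hval).resolve_left (by have := he v hv; positivity)

theorem exists_pow_eq_mul_prod_conj_mul_inv_zpow
    (hc : ∀ (φ : k →+* ℂ) (y : k), φ (c y) = (starRingEnd ℂ) (φ y)) {p M : ℕ}
    {d : HeightOneSpectrum (𝓞 k) → ℕ}
    (hx : ∀ v ∈ S, Ideal.span {x v} = v.asIdeal ^ e v) (hS : ∀ v ∈ S, primeMap c v ∉ S)
    (hSp : ∀ v ∈ S, (p : 𝓞 k) ∈ v.asIdeal) (hed : ∀ v ∈ S, e v * d v = M)
    (hcover : ∀ w : HeightOneSpectrum (𝓞 k), (p : 𝓞 k) ∈ w.asIdeal → primeMap c w ≠ w →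
      w ∈ S ∨ primeMap c w ∈ S)
    {y : k} (hy : IsEp k p y) :
    ∃ (a : HeightOneSpectrum (𝓞 k) → ℤ) (ζ : k), (∃ l : ℕ, 0 < l ∧ ζ ^ l = 1) ∧
      y ^ M = ζ * ∏ v ∈ S, (c (x v : k) * (x v : k)⁻¹) ^ a v := by
  obtain ⟨hy0, hyp, hynorm⟩ := hy
  have hcc := involutive_of_conj hc
  set a : HeightOneSpectrum (𝓞 k) → ℤ := fun v => d v * log (v.valuation k y)
  set ξ := ∏ v ∈ S, (c (x v : k) * (x v : k)⁻¹) ^ a v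
  have hξ0 : ξ ≠ 0 := Finset.prod_ne_zero_iff.mpr fun v hv =>
    zpow_ne_zero _ (isEp_conj_mul_inv hc (hx v hv) (hSp v hv)).1
  have hε0 : y ^ M * ξ⁻¹ ≠ 0 := mul_ne_zero (pow_ne_zero M hy0) (inv_ne_zero hξ0)
  have hcξ : c ξ = ξ⁻¹ := by
    simp only [ξ, map_prod, map_zpow₀, conj_conj_mul_inv hcc, inv_zpow, Finset.prod_inv_distrib]
  have hcε : c (y ^ M * ξ⁻¹) = (y ^ M * ξ⁻¹)⁻¹ := by
    rw [map_mul, map_inv₀, hcξ, map_pow, conj_eq_inv_of_norm_eq_one hc hynorm, inv_pow, mul_inv]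
  have hval : ∀ w ∈ S, w.valuation k (y ^ M * ξ⁻¹) = 1 := by
    intro w hw
    have hyw : w.valuation k y ≠ 0 := (Valuation.ne_zero_iff _).mpr hy0
    rw [map_mul, map_pow, map_inv₀, valuation_prod_conj_mul_inv_zpow hcc hx hS a hw,
      ← exp_log hyw, ← exp_nsmul, ← exp_neg, ← exp_add, exp_eq_one]
    simp only [a, nsmul_eq_mul, ← hed w hw]
    push_cast
    ring
  have hval' : ∀ w : HeightOneSpectrum (𝓞 k), (p : 𝓞 k) ∉ w.asIdeal →
      w.valuation k (y ^ M * ξ⁻¹) = 1 := by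
    intro w hpw
    rw [map_mul, map_pow, map_inv₀, hyp w hpw, map_prod, Finset.prod_eq_one fun v hv => by
      rw [map_zpow₀, (isEp_conj_mul_inv hc (hx v hv) (hSp v hv)).2.1 w hpw, one_zpow]]
    simp
  obtain ⟨l, hl, hεl⟩ := exists_pow_eq_one_of_conj_eq_inv hc hε0 hcε <|
    valuation_eq_one_of_conj_eq_inv hcc hε0 hcε (P := fun w => w ∈ S ∨ (p : 𝓞 k) ∉ w.asIdeal)
      (fun w hw => by
        by_cases hpw : (p : 𝓞 k) ∈ w.asIdeal
        · exact (hcover w hpw hw).imp Or.inl Or.inl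
        · exact Or.inl (Or.inr hpw))
      (fun w => Or.rec (hval w) (hval' w))
  exact ⟨a, y ^ M * ξ⁻¹, ⟨l, hl, hεl⟩, by rw [inv_mul_cancel_right₀ hξ0]⟩

end ConjRatio

theorem statement8_general (k : Type*) [Field k] [NumberField k]
    (c : k ≃ₐ[ℚ] k) (hc : ∀ (φ : k →+* ℂ) (y : k), φ (c y) = (starRingEnd ℂ) (φ y))
    (p : ℕ)
    (T : Finset (HeightOneSpectrum (𝓞 k)))
    (hT : ∀ v, v ∈ T ↔ ((p : 𝓞 k) ∈ v.asIdeal ∧ primeMap c v ≠ v))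
    (M : ℕ) (hM : 0 < M) (hMf : ∀ v ∈ T, fdeg p v ∣ M)
    (x : HeightOneSpectrum (𝓞 k) → 𝓞 k)
    (hxgen : ∀ v ∈ T, Ideal.span {x v} = v.asIdeal ^ (M / fdeg p v))
    (S : Finset (HeightOneSpectrum (𝓞 k))) (hST : ∀ v ∈ S, v ∈ T)
    (hSrep : ∀ v ∈ T, (v ∈ S ↔ primeMap c v ∉ S)) :
    (∀ v ∈ S, IsEp k p (c ((x v : k)) * (x v : k)⁻¹)) ∧
    (∀ a : HeightOneSpectrum (𝓞 k) → ℤ,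
        (∏ v ∈ S, (c ((x v : k)) * (x v : k)⁻¹) ^ a v) = 1 → ∀ v ∈ S, a v = 0) ∧
    (∀ y : k, IsEp k p y → ∃ n : ℕ, 0 < n ∧
        ∃ (a : HeightOneSpectrum (𝓞 k) → ℤ) (ζ : k), (∃ l : ℕ, 0 < l ∧ ζ ^ l = 1) ∧
          y ^ n = ζ * ∏ v ∈ S, (c ((x v : k)) * (x v : k)⁻¹) ^ a v) := by
  have hcc := involutive_of_conj hc
  have hx : ∀ v ∈ S, Ideal.span {x v} = v.asIdeal ^ (M / fdeg p v) := fun v hv =>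
    hxgen v (hST v hv)
  have hS : ∀ v ∈ S, primeMap c v ∉ S := fun v hv => (hSrep v (hST v hv)).mp hv
  have hSp : ∀ v ∈ S, (p : 𝓞 k) ∈ v.asIdeal := fun v hv => ((hT v).mp (hST v hv)).1
  have he : ∀ v ∈ S, 0 < M / fdeg p v := fun v hv =>
    have hfM := hMf v (hST v hv)
    Nat.div_pos (Nat.le_of_dvd hM hfM) (Nat.pos_of_dvd_of_pos hfM hM)
  have hcover : ∀ w : HeightOneSpectrum (𝓞 k), (p : 𝓞 k) ∈ w.asIdeal → primeMap c w ≠ w →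
      w ∈ S ∨ primeMap c w ∈ S := fun w hpw hw =>
    (em (w ∈ S)).imp_right fun hwS => not_not.mp (mt (hSrep w ((hT w).mpr ⟨hpw, hw⟩)).mpr hwS)
  refine ⟨fun v hv => isEp_conj_mul_inv hc (hx v hv) (hSp v hv),
    eq_zero_of_prod_conj_mul_inv_zpow_eq_one hcc hx hS he, fun y hy => ⟨M, hM, ?_⟩⟩
  exact exists_pow_eq_mul_prod_conj_mul_inv_zpow hc hx hS hSp
    (fun v hv => Nat.div_mul_cancel (hMf v (hST v hv))) hcover hy

/-- The elements `ξ_𝔭 = c(x_𝔭)·x_𝔭⁻¹` for `𝔭 ∈ S` form a `ℚ`-basis of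
`E_p(k) ⊗ ℚ`: they lie in `E_p(k)`, are multiplicatively independent, and together with the
roots of unity `μ(k)` generate a finite-index subgroup of `E_p(k)`. -/
theorem statement8 (k : Type*) [Field k] [NumberField k] (hk : _root_.IsCMField k)
    (c : k ≃ₐ[ℚ] k) (hc : ∀ (φ : k →+* ℂ) (y : k), φ (c y) = (starRingEnd ℂ) (φ y))
    (p : ℕ) (hp : p.Prime)
    (T : Finset (HeightOneSpectrum (𝓞 k)))
    (hT : ∀ v, v ∈ T ↔ ((p : 𝓞 k) ∈ v.asIdeal ∧ primeMap c v ≠ v))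
    (M : ℕ) (hM : 0 < M) (hMf : ∀ v ∈ T, fdeg p v ∣ M)
    (x : HeightOneSpectrum (𝓞 k) → 𝓞 k)
    (hxgen : ∀ v ∈ T, Ideal.span {x v} = v.asIdeal ^ (M / fdeg p v))
    (hxc : ∀ v ∈ T, c ((x v : k)) = ((x (primeMap c v) : k)))
    (S : Finset (HeightOneSpectrum (𝓞 k))) (hST : ∀ v ∈ S, v ∈ T)
    (hSrep : ∀ v ∈ T, (v ∈ S ↔ primeMap c v ∉ S)) :
    (∀ v ∈ S, IsEp k p (c ((x v : k)) * (x v : k)⁻¹)) ∧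
    (∀ a : HeightOneSpectrum (𝓞 k) → ℤ,
        (∏ v ∈ S, (c ((x v : k)) * (x v : k)⁻¹) ^ a v) = 1 → ∀ v ∈ S, a v = 0) ∧
    (∀ y : k, IsEp k p y → ∃ n : ℕ, 0 < n ∧
        ∃ (a : HeightOneSpectrum (𝓞 k) → ℤ) (ζ : k), (∃ l : ℕ, 0 < l ∧ ζ ^ l = 1) ∧
          y ^ n = ζ * ∏ v ∈ S, (c ((x v : k)) * (x v : k)⁻¹) ^ a v) :=
  statement8_general k c hc p T hT M hM hMf x hxgen S hST hSrep

end
end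

section
/- Let k be a CM field with complex conjugation c and p a rational prime. Assume that exactly two primes of k divide p, namely 𝔭 and c(𝔭) with c(𝔭) ≠ 𝔭. Let x ∈ O_k be a nonzero element whose principal ideal satisfies (x) = 𝔭^a for some integer a ≥ 1. Then c(x)·x^{-1} is not a root of unity. -/
open NumberField IsDedekindDomain IntermediateField

noncomputable section

/-! If `c(x)/x` were a root of unity of order `n`, then `c(x)^n = x^n`, so
`c(𝔭)^(an) = (c(x)^n) = (x^n) = 𝔭^(an)`, and taking radicals gives `c(𝔭) = 𝔭`. -/

lemma Ideal.IsPrime.eq_of_pow_eq {R : Type*} [CommSemiring R] {P Q : Ideal R}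
    (hP : P.IsPrime) (hQ : Q.IsPrime) {m : ℕ} (hm : m ≠ 0) (h : P ^ m = Q ^ m) : P = Q := by
  rw [← hP.radical, ← hQ.radical, ← P.radical_pow hm, h, Q.radical_pow hm]

lemma pow_eq_pow_of_mul_inv_pow_eq_one {G₀ : Type*} [CommGroupWithZero G₀] {a b : G₀} {n : ℕ}
    (h : (a * b⁻¹) ^ n = 1) : a ^ n = b ^ n := by
  rw [mul_pow, inv_pow] at h
  rcases eq_or_ne (b ^ n) 0 with hb | hb
  · simp [hb] at h
  · exact (mul_inv_eq_one₀ hb).mp h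

lemma primeMap_asIdeal {k : Type*} [Field k] [NumberField k] (σ : k ≃ₐ[ℚ] k)
    (v : HeightOneSpectrum (𝓞 k)) :
    (primeMap σ v).asIdeal = v.asIdeal.map (RingOfIntegers.mapRingEquiv σ.toRingEquiv) :=
  Ideal.comap_symm _

lemma span_mapRingEquiv_eq_primeMap_pow {k : Type*} [Field k] [NumberField k] (σ : k ≃ₐ[ℚ] k)
    {v : HeightOneSpectrum (𝓞 k)} {x : 𝓞 k} {a : ℕ} (h : Ideal.span {x} = v.asIdeal ^ a) :
    Ideal.span {RingOfIntegers.mapRingEquiv σ.toRingEquiv x} = (primeMap σ v).asIdeal ^ a := by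
  rw [primeMap_asIdeal, ← Ideal.map_pow, ← h, Ideal.map_span, Set.image_singleton]

theorem statement12_general (k : Type*) [Field k] [NumberField k]
    (c : k ≃ₐ[ℚ] k)
    (v0 : HeightOneSpectrum (𝓞 k))
    (hv0c : primeMap c v0 ≠ v0)
    (x : 𝓞 k) (a : ℕ) (ha : 1 ≤ a)
    (hxgen : Ideal.span {x} = v0.asIdeal ^ a) :
    ¬ ∃ n : ℕ, 0 < n ∧ (c ((x : k)) * (x : k)⁻¹) ^ n = 1 := by
  rintro ⟨n, hn, hroot⟩
  set y := RingOfIntegers.mapRingEquiv c.toRingEquiv x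
  have hyx : y ^ n = x ^ n :=
    RingOfIntegers.coe_injective (by push_cast; exact pow_eq_pow_of_mul_inv_pow_eq_one hroot)
  have hpow : (primeMap c v0).asIdeal ^ (a * n) = v0.asIdeal ^ (a * n) := by
    rw [pow_mul, pow_mul, ← span_mapRingEquiv_eq_primeMap_pow c hxgen, ← hxgen,
      Ideal.span_singleton_pow, Ideal.span_singleton_pow, hyx]
  exact hv0c <| HeightOneSpectrum.ext <|
    (primeMap c v0).isPrime.eq_of_pow_eq v0.isPrime (by positivity) hpow

/-- (Trivial example.) If exactly two primes `𝔭 ≠ c(𝔭)` of the CM field `k`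
divide `p` and `(x) = 𝔭^a` with `a ≥ 1`, then `c(x)·x⁻¹` is not a root of unity. -/
theorem statement12 (k : Type*) [Field k] [NumberField k] (hk : _root_.IsCMField k)
    (c : k ≃ₐ[ℚ] k) (hc : ∀ (φ : k →+* ℂ) (y : k), φ (c y) = (starRingEnd ℂ) (φ y))
    (p : ℕ) (hp : p.Prime)
    (v0 : HeightOneSpectrum (𝓞 k)) (hv0p : (p : 𝓞 k) ∈ v0.asIdeal)
    (hv0c : primeMap c v0 ≠ v0)
    (htwo : ∀ v : HeightOneSpectrum (𝓞 k), (p : 𝓞 k) ∈ v.asIdeal → v = v0 ∨ v = primeMap c v0)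
    (x : 𝓞 k) (hx0 : x ≠ 0) (a : ℕ) (ha : 1 ≤ a)
    (hxgen : Ideal.span {x} = v0.asIdeal ^ a) :
    ¬ ∃ n : ℕ, 0 < n ∧ (c ((x : k)) * (x : k)⁻¹) ^ n = 1 :=
  statement12_general k c v0 hv0c x a ha hxgen

end
end

section
/- Let k ⊂ ℂ be a CM field, p a rational prime, H a subgroup of Aut(k) not containing complex conjugation c, and ξ ∈ E_p(k) such that the set of conjugates {σ(ξ) : σ ∈ H} is a ℚ-basis of E_p(k) ⊗_ℤ ℚ. Let H_ξ = {σ ∈ H : σ(ξ) = ξ} and H̄ = H/H_ξ. Fix an integer N ≥ 1 and for each σ̄ ∈ H̄ choose a complex number ℓ_{σ̄} with exp(ℓ_{σ̄}) = σ̄(ξ)^N. Then the family (ℓ_{σ̄})_{σ̄ ∈ H̄} is linearly independent over ℚ. -/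
/-! Since `ℚ` is the fraction field of `ℤ`, it suffices to rule out integer relations
`∑ n_σ̄ ℓ_σ̄ = 0`. Exponentiating one gives `∏ σ̄(ξ)^(N n_σ̄) = 1`. The kernel of `H → H̄` is the
stabilizer of `ξ`, so the `σ̄(ξ)` are distinct members of the multiplicatively independent set
of conjugates, and hence `N n_σ̄ = 0`. -/

open NumberField IsDedekindDomain IntermediateField

noncomputable section

/-- A finite subset `Ξ` of `k` is a `ℚ`-basis of `E_p(k) ⊗ ℚ`: its elements lie in `E_p(k)`,
are multiplicatively independent, and together with the roots of unity `μ(k)` generate a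
finite-index subgroup of `E_p(k)`. -/
def IsQBasisEpSet (k : Type*) [Field k] [NumberField k] (p : ℕ) (Ξ : Finset k) : Prop :=
  (∀ x ∈ Ξ, IsEp k p x) ∧
  (∀ a : k → ℤ, (∏ x ∈ Ξ, x ^ a x) = 1 → ∀ x ∈ Ξ, a x = 0) ∧
  (∀ y : k, IsEp k p y → ∃ n : ℕ, 0 < n ∧ ∃ (a : k → ℤ) (ζ : k),
      (∃ l : ℕ, 0 < l ∧ ζ ^ l = 1) ∧ y ^ n = ζ * ∏ x ∈ Ξ, x ^ a x)

def MulIndependent {ι M : Type*} [CommGroupWithZero M] (x : ι → M) : Prop :=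
  ∀ (s : Finset ι) (n : ι → ℤ), ∏ i ∈ s, x i ^ n i = 1 → ∀ i ∈ s, n i = 0

theorem mulIndependent_of_injective_of_mem {ι M : Type*} [CommGroupWithZero M]
    [DecidableEq M] {Ξ : Finset M}
    (hΞ : ∀ a : M → ℤ, ∏ x ∈ Ξ, x ^ a x = 1 → ∀ x ∈ Ξ, a x = 0)
    {f : ι → M} (hf : Function.Injective f) (hfΞ : ∀ i, f i ∈ Ξ) : MulIndependent f := by
  intro s n hprod i hi
  set b : M → ℤ := fun y => if y ∈ s.image f then Function.extend f n 0 y else 0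
  have hb : ∀ j ∈ s, b (f j) = n j := fun j hj => by
    simp only [b, if_pos (Finset.mem_image_of_mem f hj), hf.extend_apply]
  have hsub : s.image f ⊆ Ξ := Finset.image_subset_iff.mpr fun j _ => hfΞ j
  have hΞprod : ∏ y ∈ Ξ, y ^ b y = 1 :=
    calc ∏ y ∈ Ξ, y ^ b y = ∏ y ∈ s.image f, y ^ b y :=
          (Finset.prod_subset hsub fun y _ hy => by simp only [b, if_neg hy, zpow_zero]).symm
      _ = ∏ j ∈ s, f j ^ n j := by
          rw [Finset.prod_image hf.injOn]
          exact Finset.prod_congr rfl fun j hj => by rw [hb j hj]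
      _ = 1 := hprod
  rw [← hb i hi]
  exact hΞ b hΞprod (f i) (hfΞ i)

theorem MulIndependent.map {ι M N : Type*} [CommGroupWithZero M] [CommGroupWithZero N]
    {x : ι → M} (hx : MulIndependent x) (φ : M →*₀ N) (hφ : Function.Injective φ) :
    MulIndependent (φ ∘ x) := by
  intro s n hprod
  refine hx s n (hφ ?_)
  simpa only [map_prod, map_zpow₀, map_one, Function.comp_apply] using hprod

theorem linearIndependent_rat_of_exp_eq_pow {ι : Type*} {x : ι → ℂ} (hx : MulIndependent x)
    {N : ℕ} (hN : N ≠ 0) {ℓ : ι → ℂ} (hℓ : ∀ i, Complex.exp (ℓ i) = x i ^ N) :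
    LinearIndependent ℚ ℓ := by
  rw [← LinearIndependent.iff_fractionRing ℤ ℚ, linearIndependent_iff']
  intro s g hsum i hi
  have hprod : ∏ j ∈ s, x j ^ ((N : ℤ) * g j) = 1 := by
    calc ∏ j ∈ s, x j ^ ((N : ℤ) * g j) = ∏ j ∈ s, Complex.exp (g j * ℓ j) := by
          refine Finset.prod_congr rfl fun j _ => ?_
          rw [Complex.exp_int_mul, hℓ, zpow_mul, zpow_natCast]
      _ = 1 := by simpa [← Complex.exp_sum, zsmul_eq_mul] using congrArg Complex.exp hsum
  simpa [hN] using hx s _ hprod i hi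

theorem MulAction.injective_of_ker_eq_stabilizer {G Q X : Type*} [Group G] [Group Q]
    [MulAction G X] {x : X} {π : G →* Q} (hπ : Function.Surjective π)
    (hker : ∀ g, π g = 1 ↔ g • x = x) {f : Q → X} (hf : ∀ g, f (π g) = g • x) :
    Function.Injective f := by
  intro ρ ρ' h
  obtain ⟨g, rfl⟩ := hπ ρ
  obtain ⟨g', rfl⟩ := hπ ρ'
  rw [hf, hf] at h
  have : π (g'⁻¹ * g) = 1 := (hker _).mpr (by rw [mul_smul, h, inv_smul_smul])
  rwa [map_mul, map_inv, inv_mul_eq_one, eq_comm] at this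

theorem statement16_general (k : Subfield ℂ) [NumberField ↥k]
    (p : ℕ)
    (H : Subgroup (↥k ≃ₐ[ℚ] ↥k))
    (ξ : ↥k)
    (hbasis : ∃ Ξ : Finset ↥k,
        (Ξ : Set ↥k) = (fun σ : ↥k ≃ₐ[ℚ] ↥k => σ ξ) '' (H : Set (↥k ≃ₐ[ℚ] ↥k)) ∧
        IsQBasisEpSet ↥k p Ξ)
    (Q : Type*) [Group Q] (π : ↥H →* Q) (hπ : Function.Surjective π)
    (hker : ∀ σ : ↥H, π σ = 1 ↔ (σ : ↥k ≃ₐ[ℚ] ↥k) ξ = ξ)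
    (act : Q → ↥k) (hact : ∀ σ : ↥H, act (π σ) = (σ : ↥k ≃ₐ[ℚ] ↥k) ξ)
    (N : ℕ) (hN : 0 < N)
    (ℓ : Q → ℂ) (hℓ : ∀ ρ : Q, Complex.exp (ℓ ρ) = ((act ρ : ℂ)) ^ N) :
    LinearIndependent ℚ ℓ := by
  classical
  obtain ⟨Ξ, hΞ, -, hind, -⟩ := hbasis
  have hinj : Function.Injective act := MulAction.injective_of_ker_eq_stabilizer hπ hker hact
  have hmem : ∀ ρ, act ρ ∈ Ξ := by
    intro ρ
    obtain ⟨σ, rfl⟩ := hπ ρ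
    have : (σ : ↥k ≃ₐ[ℚ] ↥k) ξ ∈ (Ξ : Set ↥k) := hΞ ▸ ⟨σ, σ.2, rfl⟩
    rwa [hact]
  have hindep : MulIndependent act := mulIndependent_of_injective_of_mem hind hinj hmem
  exact linearIndependent_rat_of_exp_eq_pow
    (hindep.map k.subtype.toMonoidWithZeroHom Subtype.val_injective) hN.ne' hℓ

set_option synthInstance.maxHeartbeats 1000000 in
/-- For `H ≤ Aut k` with `c ∉ H`, `ξ ∈ E_p(k)` whose `H`-conjugates form a
`ℚ`-basis of `E_p(k) ⊗ ℚ`, `H̄ = H/H_ξ` (realized as `Q` with surjection `π` of kernel the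
stabilizer of `ξ`), `N ≥ 1`, and any logarithms `ℓ_σ̄` with `exp ℓ_σ̄ = σ̄(ξ)^N`, the family
`(ℓ_σ̄)_{σ̄ ∈ H̄}` is `ℚ`-linearly independent. -/
theorem statement16 (k : Subfield ℂ) [NumberField ↥k] (hk : _root_.IsCMField ↥k)
    (p : ℕ) (hp : p.Prime)
    (c : ↥k ≃ₐ[ℚ] ↥k) (hc : ∀ (φ : ↥k →+* ℂ) (y : ↥k), φ (c y) = (starRingEnd ℂ) (φ y))
    (H : Subgroup (↥k ≃ₐ[ℚ] ↥k)) (hcH : c ∉ H)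
    (ξ : ↥k) (hξ : IsEp ↥k p ξ)
    (hbasis : ∃ Ξ : Finset ↥k,
        (Ξ : Set ↥k) = (fun σ : ↥k ≃ₐ[ℚ] ↥k => σ ξ) '' (H : Set (↥k ≃ₐ[ℚ] ↥k)) ∧
        IsQBasisEpSet ↥k p Ξ)
    (Q : Type*) [Group Q] (π : ↥H →* Q) (hπ : Function.Surjective π)
    (hker : ∀ σ : ↥H, π σ = 1 ↔ (σ : ↥k ≃ₐ[ℚ] ↥k) ξ = ξ)
    (act : Q → ↥k) (hact : ∀ σ : ↥H, act (π σ) = (σ : ↥k ≃ₐ[ℚ] ↥k) ξ)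
    (N : ℕ) (hN : 0 < N)
    (ℓ : Q → ℂ) (hℓ : ∀ ρ : Q, Complex.exp (ℓ ρ) = ((act ρ : ℂ)) ^ N) :
    LinearIndependent ℚ ℓ :=
  statement16_general k p H ξ hbasis Q π hπ hker act hact N hN ℓ hℓ

end
end
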